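/- arXiv:2103.10893 — 4 statements merged into one kernel-verified Lean document; each statement's English description precedes it below -/
import Mathlib

section
/- Friedrichs' criterion: in the word algebra over a field of characteristic zero, an element is a Lie polynomial (lies in the free Lie algebra generated by the letters under commutators) if and only if it is primitive for the deshuffle coproduct. -/
/-- The deshuffle of a word: all ways of splitting it into a subword and the
complementary subword. -/
def desh {A : Type*} : List A → List (List A × List A)
  | [] => [([], [])]
  | a :: w =>
      ((desh w).map fun p => (a :: p.1, p.2)) ++ ((desh w).map fun p => (p.1, a :: p.2))

/-- The deshuffle coproduct on the word algebra, with `T(A) ⊗ T(A)` realized as the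
free vector space on pairs of words; it is the unique algebra morphism for
concatenation sending each letter `a` to `1 ⊗ a + a ⊗ 1`. -/
noncomputable def Dsh {A K : Type*} [Field K]
    (x : List A →₀ K) : (List A × List A) →₀ K :=
  x.sum fun w c => c • ((desh w).map (fun p => Finsupp.single p (1 : K))).sum

/-- The bilinear extension of the concatenation product of words. -/
noncomputable def concP {A K : Type*} [Field K]
    (x y : List A →₀ K) : List A →₀ K :=
  x.sum fun u cu => y.sum fun v cv => Finsupp.single (u ++ v) (cu * cv)

/-- `x` is primitive for the deshuffle coproduct: `Δ_⧢(x) = 1 ⊗ x + x ⊗ 1`. -/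
def IsPrimitive {A K : Type*} [Field K] (x : List A →₀ K) : Prop :=
  Dsh x = Finsupp.mapDomain (fun u => (([] : List A), u)) x
    + Finsupp.mapDomain (fun u => (u, ([] : List A))) x

/-- `x` is a Lie polynomial: it lies in the Lie subalgebra of the word algebra
generated by the letters under the commutator `[u,v] = uv − vu`. -/
inductive IsLiePoly {A K : Type*} [Field K] : (List A →₀ K) → Prop
  | zero : IsLiePoly 0
  | letter (a : A) : IsLiePoly (Finsupp.single [a] 1)
  | add {x y} : IsLiePoly x → IsLiePoly y → IsLiePoly (x + y)
  | smul (c : K) {x} : IsLiePoly x → IsLiePoly (c • x)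
  | bracket {x y} : IsLiePoly x → IsLiePoly y → IsLiePoly (concP x y - concP y x)

/-!
Model the word algebra as the monoid algebra of the free monoid and `T(A) ⊗ T(A)` as the monoid
algebra of pairs of words; then `Δ_⧢` is the algebra map sending a letter `a` to
`1 ⊗ a + a ⊗ 1`. Since every `x ⊗ 1` commutes with every `1 ⊗ y`, the commutator of two
primitive elements is primitive, and letters are primitive, so Lie polynomials are primitive.

Conversely, contract `Δ_⧢` by `u ⊗ v ↦ c(|u|, |v|) (-1)^|v| u ṽ`, with `ṽ` the reversed word.
For `c = 1` this is `μ ∘ (id ⊗ S)` with `S` the antipode, which kills `Δ_⧢ w` for `w ≠ 1`;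
for `c(m, n) = m` it is the Dynkin operator, which sends `Δ_⧢ (a₁⋯aₙ)` to the right-nested
bracket `[a₁, [a₂, …, [aₙ₋₁, aₙ]…]]`. Dividing the weight by the total length `m + n`, which is
possible in characteristic zero, makes the contraction fix `x ⊗ 1` and kill `1 ⊗ x` apart from
constant terms, so the primitivity equation becomes `x = ∑_w x_w |w|⁻¹ [a₁, […]]`.
-/

open MonoidAlgebra

theorem map_lie_eq_add_of_commute {R S : Type*} [Ring R] [Ring S] (Δ ι₁ ι₂ : R →+* S)
    (hcomm : ∀ x y, Commute (ι₁ x) (ι₂ y)) {x y : R}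
    (hx : Δ x = ι₁ x + ι₂ x) (hy : Δ y = ι₁ y + ι₂ y) :
    Δ ⁅x, y⁆ = ι₁ ⁅x, y⁆ + ι₂ ⁅x, y⁆ := by
  simp only [Ring.lie_def, map_sub, map_mul, hx, hy, add_mul, mul_add, (hcomm x y).eq,
    (hcomm y x).eq]
  abel

namespace WordAlgebra

section Deshuffle

variable (R A : Type*) [CommRing R]

local notation "𝕋" => MonoidAlgebra R (FreeMonoid A)
local notation "𝕋₂" => MonoidAlgebra R (FreeMonoid A × FreeMonoid A)

noncomputable def includeLeft : 𝕋 →ₐ[R] 𝕋₂ := mapDomainAlgHom R R (MonoidHom.inl _ _)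

noncomputable def includeRight : 𝕋 →ₐ[R] 𝕋₂ := mapDomainAlgHom R R (MonoidHom.inr _ _)

noncomputable def deshuffle : 𝕋 →ₐ[R] 𝕋₂ :=
  lift R 𝕋₂ _ <| FreeMonoid.lift fun a =>
    includeRight R A (of R _ (.of a)) + includeLeft R A (of R _ (.of a))

variable {R A}

theorem commute_includeLeft_includeRight (x y : 𝕋) :
    Commute (includeLeft R A x) (includeRight R A y) := by
  induction x using MonoidAlgebra.induction_on with
  | add x x' hx hx' => rw [map_add]; exact hx.add_left hx'
  | smul r x hx => rw [map_smul]; exact hx.smul_left r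
  | of u =>
    induction y using MonoidAlgebra.induction_on with
    | add y y' hy hy' => rw [map_add]; exact hy.add_right hy'
    | smul r y hy => rw [map_smul]; exact hy.smul_right r
    | of v =>
      simp only [includeLeft, includeRight, mapDomainAlgHom_apply, of_apply, mapDomain_single,
        single_mul_single, commute_iff_eq, mul_one, one_mul, MonoidHom.inl_apply,
        MonoidHom.inr_apply, Prod.mk_mul_mk]

theorem deshuffle_of_of (a : A) : deshuffle R A (of R _ (.of a)) =
    includeRight R A (of R _ (.of a)) + includeLeft R A (of R _ (.of a)) := by
  simp [deshuffle]

theorem deshuffle_of (w : FreeMonoid A) : deshuffle R A (of R _ w) =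
    ((desh w.toList).map fun p => single (FreeMonoid.ofList p.1, FreeMonoid.ofList p.2) 1).sum := by
  induction w using FreeMonoid.inductionOn' with
  | one =>
    rw [map_one, map_one, FreeMonoid.toList_one]
    simp only [desh, List.map_cons, List.map_nil, FreeMonoid.ofList_nil, List.sum_cons,
      List.sum_nil, add_zero]
    rfl
  | of_mul a w ih =>
    rw [map_mul, map_mul, deshuffle_of_of, ih, add_mul, ← List.sum_map_mul_left,
      ← List.sum_map_mul_left]
    simp only [desh, FreeMonoid.toList_of_mul, List.map_append, List.sum_append, List.map_map,
      Function.comp_def, includeLeft, includeRight, mapDomainAlgHom_apply, of_apply,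
      mapDomain_single, single_mul_single, mul_one, one_mul, MonoidHom.inl_apply,
      MonoidHom.inr_apply, Prod.mk_mul_mk, FreeMonoid.ofList_cons, add_comm]

theorem deshuffle_single (w : FreeMonoid A) (c : R) : deshuffle R A (single w c) =
    c • ((desh w.toList).map fun p =>
      single (FreeMonoid.ofList p.1, FreeMonoid.ofList p.2) 1).sum := by
  rw [← deshuffle_of, ← map_smul, of_apply, smul_single', mul_one]

theorem deshuffle_lie_of_primitive {x y : 𝕋}
    (hx : deshuffle R A x = includeRight R A x + includeLeft R A x)
    (hy : deshuffle R A y = includeRight R A y + includeLeft R A y) :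
    deshuffle R A ⁅x, y⁆ = includeRight R A ⁅x, y⁆ + includeLeft R A ⁅x, y⁆ :=
  map_lie_eq_add_of_commute (deshuffle R A : 𝕋 →+* 𝕋₂) (includeRight R A : 𝕋 →+* 𝕋₂)
    (includeLeft R A : 𝕋 →+* 𝕋₂) (fun x y => (commute_includeLeft_includeRight y x).symm) hx hy

end Deshuffle

section Contraction

variable {R A : Type*} [CommRing R]

local notation "𝕋" => MonoidAlgebra R (FreeMonoid A)
local notation "𝕋₂" => MonoidAlgebra R (FreeMonoid A × FreeMonoid A)

variable (R A) in
noncomputable def dynkin : List A → 𝕋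
  | [] => 0
  | [a] => of R _ (FreeMonoid.of a)
  | a :: b :: t => ⁅of R _ (FreeMonoid.of a), dynkin (b :: t)⁆

variable (A) in
noncomputable def contraction (c : ℕ → ℕ → R) : 𝕋₂ →ₗ[R] 𝕋 :=
  (Finsupp.linearCombination R fun p : FreeMonoid A × FreeMonoid A =>
    (c p.1.length p.2.length * (-1) ^ p.2.length) • of R _ (p.1 * p.2.reverse)).comp
    (coeffLinearEquiv R).toLinearMap

theorem contraction_single (c : ℕ → ℕ → R) (u v : FreeMonoid A) (r : R) :
    contraction A c (single (u, v) r) =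
      (r * c u.length v.length * (-1) ^ v.length) • of R _ (u * v.reverse) := by
  simp [contraction, coeff_single, mul_assoc]

theorem contraction_add_weight (c d : ℕ → ℕ → R) :
    contraction A (c + d) = contraction A c + contraction A d := by
  ext ⟨u, v⟩ r
  simp [contraction_single, add_mul, mul_add, add_smul]

theorem contraction_smul_weight (s : R) (c : ℕ → ℕ → R) :
    contraction A (s • c) = s • contraction A c := by
  ext ⟨u, v⟩ r
  simp [contraction_single, mul_left_comm, mul_assoc]

theorem contraction_one (c : ℕ → ℕ → R) : contraction A c (1 : 𝕋₂) = c 0 0 • 1 := by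
  rw [one_def, Prod.one_eq_mk, contraction_single]
  simp only [FreeMonoid.length_one, pow_zero, one_mul, mul_one, of_apply, smul_single,
    smul_eq_mul, one_def]
  rfl

theorem contraction_includeLeft_mul (c : ℕ → ℕ → R) (a : A) (P : 𝕋₂) :
    contraction A c (includeLeft R A (of R _ (.of a)) * P) =
      of R _ (.of a) * contraction A (fun m n => c (m + 1) n) P := by
  induction P using MonoidAlgebra.induction_linear with
  | zero => simp
  | add P Q hP hQ => rw [mul_add, map_add, hP, hQ, map_add, mul_add]
  | single p r =>
    obtain ⟨u, v⟩ := p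
    simp only [includeLeft, of_apply, mapDomainAlgHom_apply, mapDomain_single,
      MonoidHom.inl_apply, single_mul_single, Prod.mk_mul_mk, one_mul]
    rw [contraction_single, contraction_single, mul_smul_comm, ← of_apply, ← map_mul,
      FreeMonoid.length_mul, FreeMonoid.length_of, add_comm 1, mul_assoc, mul_assoc]

theorem contraction_includeRight_mul (c : ℕ → ℕ → R) (a : A) (P : 𝕋₂) :
    contraction A c (includeRight R A (of R _ (.of a)) * P) =
      -(contraction A (fun m n => c m (n + 1)) P * of R _ (.of a)) := by
  induction P using MonoidAlgebra.induction_linear with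
  | zero => simp
  | add P Q hP hQ => rw [mul_add, map_add, hP, hQ, map_add, add_mul, neg_add]
  | single p r =>
    obtain ⟨u, v⟩ := p
    simp only [includeRight, of_apply, mapDomainAlgHom_apply, mapDomain_single,
      MonoidHom.inr_apply, single_mul_single, Prod.mk_mul_mk, one_mul]
    rw [contraction_single, contraction_single, smul_mul_assoc, ← of_apply, ← map_mul,
      ← neg_smul, FreeMonoid.length_mul, FreeMonoid.length_of, FreeMonoid.reverse_mul,
      FreeMonoid.reverse_of, add_comm 1, pow_succ, ← mul_assoc u]
    congr 1
    ring

theorem contraction_deshuffle_of_mul (c : ℕ → ℕ → R) (a : A) (w : FreeMonoid A) :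
    contraction A c (deshuffle R A (of R _ (.of a * w))) =
      of R _ (.of a) * contraction A (fun m n => c (m + 1) n) (deshuffle R A (of R _ w)) -
        contraction A (fun m n => c m (n + 1)) (deshuffle R A (of R _ w)) * of R _ (.of a) := by
  rw [map_mul, map_mul, deshuffle_of_of, add_mul, map_add, contraction_includeLeft_mul,
    contraction_includeRight_mul, neg_add_eq_sub]

theorem contraction_deshuffle_congr {c d : ℕ → ℕ → R} (w : FreeMonoid A)
    (h : ∀ m n, m + n = w.length → c m n = d m n) :
    contraction A c (deshuffle R A (of R _ w)) = contraction A d (deshuffle R A (of R _ w)) := by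
  induction w using FreeMonoid.inductionOn' generalizing c d with
  | one => rw [map_one, map_one, contraction_one, contraction_one, h 0 0 rfl]
  | of_mul a w ih =>
    have hlen : (FreeMonoid.of a * w).length = w.length + 1 := by
      rw [FreeMonoid.length_mul, FreeMonoid.length_of, add_comm]
    rw [contraction_deshuffle_of_mul, contraction_deshuffle_of_mul,
      ih fun m n hmn => h _ _ (by omega), ih fun m n hmn => h _ _ (by omega)]

theorem contraction_deshuffle_of_mul_eq_zero (a : A) (w : FreeMonoid A) :
    contraction A (fun _ _ => 1) (deshuffle R A (of R _ (.of a * w))) = (0 : 𝕋) := by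
  induction w using FreeMonoid.inductionOn' generalizing a with
  | one =>
    rw [contraction_deshuffle_of_mul, map_one, map_one, contraction_one, one_smul, mul_one,
      one_mul, sub_self]
  | of_mul b w ih => rw [contraction_deshuffle_of_mul, ih, mul_zero, zero_mul, sub_self]

theorem contraction_deshuffle_eq_dynkin (w : List A) :
    contraction A (fun m _ => (m : R)) (deshuffle R A (of R _ (.ofList w))) = dynkin R A w := by
  have hshift : (fun m (_ : ℕ) => ((m + 1 : ℕ) : R)) =
      (fun (m _ : ℕ) => (m : R)) + fun (_ _ : ℕ) => (1 : R) := by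
    funext m n
    simp
  induction w with
  | nil =>
    rw [FreeMonoid.ofList_nil, map_one, map_one, contraction_one, Nat.cast_zero, zero_smul, dynkin]
  | cons a w ih =>
    rw [FreeMonoid.ofList_cons, contraction_deshuffle_of_mul, hshift, contraction_add_weight,
      LinearMap.add_apply, ih, mul_add]
    cases w with
    | nil =>
      rw [FreeMonoid.ofList_nil, map_one, map_one, contraction_one, one_smul, mul_one, dynkin,
        dynkin, mul_zero, zero_mul, sub_zero, zero_add]
    | cons b t =>
      rw [FreeMonoid.ofList_cons, contraction_deshuffle_of_mul_eq_zero, mul_zero, add_zero, dynkin,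
        Ring.lie_def]

end Contraction

section DynkinWeight

variable {K A : Type*} [Field K]

local notation "𝕋" => MonoidAlgebra K (FreeMonoid A)

variable (K) in
/-- `m / (m + n)`, except that it is `1` also at `(0, 0)`: the contraction then fixes `x ⊗ 1`
including its constant term, which cancels against the constant term of `1 ⊗ x`. -/
def dynkinWeight (m n : ℕ) : K := if n = 0 then 1 else m / (m + n)

theorem contraction_dynkinWeight_includeLeft (X : 𝕋) :
    contraction A (dynkinWeight K) (includeLeft K A X) = X := by
  suffices h : (contraction A (dynkinWeight K)).comp (includeLeft K A).toLinearMap =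
      LinearMap.id from LinearMap.congr_fun h X
  ext w r
  have hrev : FreeMonoid.reverse (1 : FreeMonoid A) = 1 := rfl
  simp [includeLeft, contraction_single, dynkinWeight, hrev]

theorem contraction_dynkinWeight_deshuffle [CharZero K] (w : FreeMonoid A) :
    contraction A (dynkinWeight K) (deshuffle K A (of K _ w)) =
      (w.length : K)⁻¹ • dynkin K A w.toList +
        contraction A (dynkinWeight K) (includeRight K A (of K _ w)) := by
  by_cases hw : w = 1
  · subst hw
    simp only [map_one, contraction_one]
    simp [dynkin]
  · have hR : contraction A (dynkinWeight K) (includeRight K A (of K _ w)) = 0 := by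
      simp [includeRight, contraction_single, dynkinWeight, of_apply, hw]
    rw [hR, add_zero, ← contraction_deshuffle_eq_dynkin, FreeMonoid.ofList_toList,
      ← LinearMap.smul_apply, ← contraction_smul_weight]
    refine contraction_deshuffle_congr w fun m n hmn => ?_
    have hlen : (m + n : K) ≠ 0 := by
      rw [← Nat.cast_add, hmn, Nat.cast_ne_zero, Ne, FreeMonoid.length_eq_zero]
      exact hw
    rw [dynkinWeight, Pi.smul_apply, Pi.smul_apply, smul_eq_mul, ← hmn, Nat.cast_add]
    split_ifs with hn
    · subst hn
      simp_all
    · rw [div_eq_inv_mul]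

theorem eq_sum_dynkin_of_primitive [CharZero K] {X : 𝕋}
    (hX : deshuffle K A X = includeRight K A X + includeLeft K A X) :
    X = X.coeff.sum fun w r => (r / w.length) • dynkin K A w.toList := by
  have expand (f : 𝕋 →ₗ[K] 𝕋) : f X = X.coeff.sum fun w r => f (single w r) := by
    conv_lhs => rw [← sum_coeff_single X]
    exact map_finsuppSum f _ _
  have hΔ : contraction A (dynkinWeight K) (deshuffle K A X) =
      (X.coeff.sum fun w r => (r / w.length) • dynkin K A w.toList) +
        contraction A (dynkinWeight K) (includeRight K A X) := by
    have hΔX := expand ((contraction A (dynkinWeight K)).comp (deshuffle K A).toLinearMap)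
    have hRX := expand ((contraction A (dynkinWeight K)).comp (includeRight K A).toLinearMap)
    simp only [LinearMap.comp_apply, AlgHom.toLinearMap_apply] at hΔX hRX
    rw [hΔX, hRX, ← Finsupp.sum_add]
    refine Finsupp.sum_congr fun w _ => ?_
    rw [← smul_of, map_smul, map_smul, map_smul, map_smul, contraction_dynkinWeight_deshuffle,
      smul_add, smul_smul, div_eq_mul_inv]
  rw [hX, map_add, contraction_dynkinWeight_includeLeft, add_comm] at hΔ
  exact add_right_cancel hΔ

end DynkinWeight

end WordAlgebra

section WordsAsFreeMonoid

open WordAlgebra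

variable {A K : Type*} [Field K]

/-- `FreeMonoid A` is `List A`, so this is the identity on coefficients. -/
noncomputable def toWordAlgebra : (List A →₀ K) ≃ₗ[K] MonoidAlgebra K (FreeMonoid A) :=
  (coeffLinearEquiv K).symm

theorem toWordAlgebra_concP (x y : List A →₀ K) :
    toWordAlgebra (concP x y) = toWordAlgebra x * toWordAlgebra y := by
  rw [mul_def, concP]
  refine (ofCoeff_finsuppSum (M := FreeMonoid A) _ _).trans (Finsupp.sum_congr fun u _ => ?_)
  exact ofCoeff_finsuppSum (M := FreeMonoid A) _ _

theorem toWordAlgebra_symm_mul (X Y : MonoidAlgebra K (FreeMonoid A)) :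
    toWordAlgebra.symm (X * Y) = concP (toWordAlgebra.symm X) (toWordAlgebra.symm Y) := by
  apply toWordAlgebra.injective
  rw [toWordAlgebra_concP, LinearEquiv.apply_symm_apply, LinearEquiv.apply_symm_apply,
    LinearEquiv.apply_symm_apply]

theorem Dsh_eq_coeff_deshuffle (x : List A →₀ K) :
    Dsh x = (deshuffle K A (toWordAlgebra x)).coeff := by
  conv_rhs => rw [← sum_coeff_single (toWordAlgebra x)]
  rw [map_finsuppSum, coeff_finsuppSum]
  refine Finsupp.sum_congr fun w _ => ?_
  rw [deshuffle_single (A := A) w, coeff_smul]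
  congr 1
  refine Eq.trans ?_
    (map_list_sum (coeffAddEquiv (R := K) (M := FreeMonoid A × FreeMonoid A)) _).symm
  rw [List.map_map]
  rfl

theorem isPrimitive_iff (x : List A →₀ K) : IsPrimitive x ↔ deshuffle K A (toWordAlgebra x) =
    includeRight K A (toWordAlgebra x) + includeLeft K A (toWordAlgebra x) := by
  rw [IsPrimitive, Dsh_eq_coeff_deshuffle, ← coeff_inj]
  rfl

theorem IsLiePoly.isPrimitive {x : List A →₀ K} (hx : IsLiePoly x) : IsPrimitive x := by
  induction hx with
  | zero => simp [isPrimitive_iff]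
  | letter a => rw [isPrimitive_iff]; exact deshuffle_of_of a
  | add _ _ hx hy =>
    rw [isPrimitive_iff] at *
    rw [map_add, map_add, map_add, map_add, hx, hy]
    abel
  | smul c _ hx =>
    rw [isPrimitive_iff] at *
    rw [map_smul, map_smul, map_smul, map_smul, hx, smul_add]
  | bracket _ _ hx hy =>
    rw [isPrimitive_iff] at *
    rw [map_sub, toWordAlgebra_concP, toWordAlgebra_concP, ← Ring.lie_def]
    exact deshuffle_lie_of_primitive hx hy

theorem isLiePoly_dynkin (w : List A) : IsLiePoly (toWordAlgebra.symm (dynkin K A w)) := by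
  induction w using dynkin.induct with
  | case1 => rw [dynkin, map_zero]; exact .zero
  | case2 a => exact .letter a
  | case3 a b t ih =>
    rw [dynkin, Ring.lie_def, map_sub, toWordAlgebra_symm_mul, toWordAlgebra_symm_mul]
    exact .bracket (.letter a) ih

theorem isLiePoly_sum {ι : Type*} (s : Finset ι) (f : ι → List A →₀ K)
    (hf : ∀ i ∈ s, IsLiePoly (f i)) : IsLiePoly (∑ i ∈ s, f i) :=
  Finset.sum_induction _ _ (fun _ _ => .add) .zero hf

theorem IsPrimitive.isLiePoly [CharZero K] {x : List A →₀ K} (hx : IsPrimitive x) :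
    IsLiePoly x := by
  rw [isPrimitive_iff] at hx
  rw [← toWordAlgebra.symm_apply_apply x, eq_sum_dynkin_of_primitive hx, map_finsuppSum]
  refine isLiePoly_sum _ _ fun w _ => ?_
  simp only [map_smul]
  exact .smul _ (isLiePoly_dynkin _)

end WordsAsFreeMonoid

/-- Friedrichs' criterion: over a field of characteristic zero, an element of the
word algebra is a Lie polynomial if and only if it is primitive for the deshuffle
coproduct. -/
theorem friedrichs_criterion {A K : Type*} [Field K] [CharZero K] :
    ∀ x : List A →₀ K, IsLiePoly x ↔ IsPrimitive x :=
  fun _ => ⟨IsLiePoly.isPrimitive, IsPrimitive.isLiePoly⟩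
end

section
/- In any D-algebra (A, ·, ▷), the set of derivations 𝒟(A) = {x : x ▷ (a·b) = (x ▷ a)·b + a·(x ▷ b) for all a,b} is a linear subspace of A, and it is closed under the bracket ⟦x,y⟧ = x ▷ y − y ▷ x + x·y − y·x. -/
/-!
The Leibniz rule is linear in `x`, so the derivations form a subspace. For the bracket,
the axiom `x ▷ (a ▷ b) = (x·a) ▷ b + (x ▷ a) ▷ b`, applied to `x` and to `y`, says that
`⟦x,y⟧ ▷ -` is the commutator of the operators `x ▷ -` and `y ▷ -`, and the commutator of
two derivations of an associative product is again a derivation.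
-/

/-- `x` is a derivation of the associative product with respect to `▷`. -/
def IsDer {K A : Type*} [Field K] [Ring A] [Algebra K A]
    (t : A →ₗ[K] A →ₗ[K] A) (x : A) : Prop :=
  ∀ a b : A, t x (a * b) = t x a * b + a * t x b

section

variable {K A : Type*} [Field K] [Ring A] [Algebra K A] {t : A →ₗ[K] A →ₗ[K] A}

theorem isDer_zero (t : A →ₗ[K] A →ₗ[K] A) : IsDer t 0 := by
  intro a b
  simp

theorem IsDer.add {x y : A} (hx : IsDer t x) (hy : IsDer t y) : IsDer t (x + y) := by
  intro a b
  simp only [map_add, LinearMap.add_apply, hx a b, hy a b, add_mul, mul_add]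
  abel

theorem IsDer.smul {x : A} (c : K) (hx : IsDer t x) : IsDer t (c • x) := by
  intro a b
  simp only [map_smul, LinearMap.smul_apply, hx a b, smul_add, smul_mul_assoc, mul_smul_comm]

theorem IsDer.of_apply_eq_commutator {x y z : A} (hx : IsDer t x) (hy : IsDer t y)
    (hz : ∀ c, t z c = t x (t y c) - t y (t x c)) : IsDer t z := by
  intro a b
  rw [hz, hz, hz, hx, hy, map_add, map_add, hx, hx, hy, hy]
  simp only [sub_mul, mul_sub]
  abel

theorem apply_bracket_eq_commutator
    (hcomp : ∀ x a b : A, IsDer t x → t x (t a b) = t (x * a) b + t (t x a) b)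
    {x y : A} (hx : IsDer t x) (hy : IsDer t y) (c : A) :
    t (t x y - t y x + (x * y - y * x)) c = t x (t y c) - t y (t x c) := by
  simp only [map_add, map_sub, LinearMap.add_apply, LinearMap.sub_apply,
    hcomp x y c hx, hcomp y x c hy]
  abel

end

theorem Dalgebra_derivations_subspace_bracket_closed_general
    {K A : Type*} [Field K] [Ring A] [Algebra K A]
    (t : A →ₗ[K] A →ₗ[K] A)
    (hcomp : ∀ (x a b : A), IsDer t x → t x (t a b) = t (x * a) b + t (t x a) b) :
    IsDer t (0 : A) ∧
    (∀ x y : A, IsDer t x → IsDer t y → IsDer t (x + y)) ∧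
    (∀ (c : K) (x : A), IsDer t x → IsDer t (c • x)) ∧
    (∀ x y : A, IsDer t x → IsDer t y →
      IsDer t (t x y - t y x + (x * y - y * x))) :=
  ⟨isDer_zero t, fun _ _ hx hy => hx.add hy, fun c _ hx => hx.smul c,
    fun _ _ hx hy => hx.of_apply_eq_commutator hy (apply_bracket_eq_commutator hcomp hx hy)⟩

/-- In any D-algebra `(A, ·, ▷)` the set of derivations
`𝒟(A) = {x : x ▷ (a·b) = (x ▷ a)·b + a·(x ▷ b)}` is a linear subspace of `A`, and it
is closed under the bracket `⟦x,y⟧ = x ▷ y − y ▷ x + x·y − y·x`. -/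
theorem Dalgebra_derivations_subspace_bracket_closed
    {K A : Type*} [Field K] [CharZero K] [Ring A] [Algebra K A]
    (t : A →ₗ[K] A →ₗ[K] A)
    (hunit : ∀ a : A, t 1 a = a)
    (hclosed : ∀ (a x : A), IsDer t x → IsDer t (t a x))
    (hcomp : ∀ (x a b : A), IsDer t x → t x (t a b) = t (x * a) b + t (t x a) b) :
    IsDer t (0 : A) ∧
    (∀ x y : A, IsDer t x → IsDer t y → IsDer t (x + y)) ∧
    (∀ (c : K) (x : A), IsDer t x → IsDer t (c • x)) ∧
    (∀ x y : A, IsDer t x → IsDer t y →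
      IsDer t (t x y - t y x + (x * y - y * x))) :=
  Dalgebra_derivations_subspace_bracket_closed_general t hcomp
end

section
/- In a D-algebra, the set of derivations 𝒟(A) equipped with the restriction of ▷ and the commutator Lie bracket [x,y] = x·y − y·x forms a post-Lie algebra. -/
section

variable {K A : Type*} [Field K] [Ring A] [Algebra K A] {t : A →ₗ[K] A →ₗ[K] A}

theorem IsDer.map_commutator {x : A} (hx : IsDer t x) (y z : A) :
    t x (y * z - z * y) = (t x y * z - z * t x y) + (y * t x z - t x z * y) := by
  rw [map_sub, hx y z, hx z y]
  abel

theorem commutator_apply_of_comp {x y : A}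
    (hx : ∀ b, t x (t y b) = t (x * y) b + t (t x y) b)
    (hy : ∀ b, t y (t x b) = t (y * x) b + t (t y x) b) (z : A) :
    t (x * y - y * x) z = t x (t y z) - t (t x y) z - t y (t x z) + t (t y x) z := by
  rw [map_sub, LinearMap.sub_apply, hx, hy]
  abel

end

theorem Dalgebra_derivations_postLie_general
    {K A : Type*} [Field K] [Ring A] [Algebra K A]
    (t : A →ₗ[K] A →ₗ[K] A)
    (hclosed : ∀ (a x : A), IsDer t x → IsDer t (t a x))
    (hcomp : ∀ (x a b : A), IsDer t x → t x (t a b) = t (x * a) b + t (t x a) b) :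
    (∀ x y : A, IsDer t x → IsDer t y → IsDer t (t x y)) ∧
    (∀ x y z : A, IsDer t x → IsDer t y → IsDer t z →
      t x (y * z - z * y) = (t x y * z - z * t x y) + (y * t x z - t x z * y)) ∧
    (∀ x y z : A, IsDer t x → IsDer t y → IsDer t z →
      t (x * y - y * x) z
        = t x (t y z) - t (t x y) z - t y (t x z) + t (t y x) z) :=
  ⟨fun x _ _ hy => hclosed x _ hy,
    fun _ y z hx _ _ => hx.map_commutator y z,
    fun x y z hx hy _ => commutator_apply_of_comp (hcomp x y · hx) (hcomp y x · hy) z⟩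

/-- In a D-algebra, the set of derivations `𝒟(A)` equipped with the restriction of `▷`
and the commutator Lie bracket `[x,y] = x·y − y·x` forms a post-Lie algebra:
`𝒟(A)` is closed under `▷`, and the two post-Lie axioms hold on `𝒟(A)`. -/
theorem Dalgebra_derivations_postLie
    {K A : Type*} [Field K] [CharZero K] [Ring A] [Algebra K A]
    (t : A →ₗ[K] A →ₗ[K] A)
    (hunit : ∀ a : A, t 1 a = a)
    (hclosed : ∀ (a x : A), IsDer t x → IsDer t (t a x))
    (hcomp : ∀ (x a b : A), IsDer t x → t x (t a b) = t (x * a) b + t (t x a) b)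
    (hbr : ∀ x y : A, IsDer t x → IsDer t y → IsDer t (x * y - y * x)) :
    (∀ x y : A, IsDer t x → IsDer t y → IsDer t (t x y)) ∧
    (∀ x y z : A, IsDer t x → IsDer t y → IsDer t z →
      t x (y * z - z * y) = (t x y * z - z * t x y) + (y * t x z - t x z * y)) ∧
    (∀ x y z : A, IsDer t x → IsDer t y → IsDer t z →
      t (x * y - y * x) z
        = t x (t y z) - t (t x y) z - t y (t x z) + t (t y x) z) :=
  Dalgebra_derivations_postLie_general t hclosed hcomp
end

section
/- Given an operad P with composition dualized to a map Δ: P → T(P) ⊗ P via ⟨x₁⋯x_n ∘ x, x'⟩ = ⟨x₁⋯x_n ⊗ x, Δ(x')⟩ (assuming each P(n) finite-dimensional with chosen basis), the multiplicative extension of Δ to the tensor algebra T(P) with concatenation product is coassociative; i.e., (T(P), concatenation, Δ) is a bialgebra. -/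
/-!
Dually to `Δ` being an algebra morphism, composing a word into a concatenation factors:
`u ∘ (w₁ w₂) = (u₁ ∘ w₁) (u₂ ∘ w₂)`, where `u = u₁ u₂` is cut after as many letters as `w₁`
has inputs. Hence the words `w` for which `⟨(u ∘ v) ∘ w, t⟩ = ⟨u ∘ (v ∘ w), t⟩` holds for all
`u, v, t` are closed under concatenation: on both sides the pairing splits as a product of the
pairings for `w₁` and for `w₂`. The empty word is trivially such a `w`, and single letters are
by the associativity of the operad, so every word is.
-/

/-- Words in the basis elements of an operad `P` whose component `P(n)` has (finite)
basis `B n`: a basis of the tensor algebra `T(P)`. -/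
abbrev OpWord (B : ℕ → Type) : Type := List (Σ n, B n)

/-- The composition `x₁ ⋯ x_n ∘ b` of a word of basis elements into a single basis
element `b ∈ B n`, expressed via the structure coefficients `c` of the operadic
composition in the chosen bases; zero when the arities do not match. -/
noncomputable def letterComp {K : Type} [Field K] {B : ℕ → Type} [∀ n, Fintype (B n)]
    (c : ∀ {n : ℕ} (k : Fin n → ℕ), (∀ i, B (k i)) → B n → B (∑ i, k i) → K)
    (u : OpWord B) {n : ℕ} (b : B n) : (Σ m, B m) →₀ K :=
  if h : u.length = n then
    ∑ b' : B (∑ i : Fin n, (u.get (Fin.cast h.symm i)).1),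
      Finsupp.single ⟨∑ i : Fin n, (u.get (Fin.cast h.symm i)).1, b'⟩
        (c (fun i => (u.get (Fin.cast h.symm i)).1)
           (fun i => (u.get (Fin.cast h.symm i)).2) b b')
  else 0

/-- The composition `u ∘ v` of words of basis elements (the multiplicative, i.e.
word-by-word, extension of the operadic composition), as an element of the free
vector space on words; dually, its coefficients are the coefficients of the
coproduct `Δ` on `T(P)` obtained by dualizing operadic composition. -/
noncomputable def wordComp {K : Type} [Field K] {B : ℕ → Type} [∀ n, Fintype (B n)]
    [∀ n, DecidableEq (B n)]
    (c : ∀ {n : ℕ} (k : Fin n → ℕ), (∀ i, B (k i)) → B n → B (∑ i, k i) → K) :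
    OpWord B → OpWord B → (OpWord B →₀ K)
  | u, [] => if u = [] then Finsupp.single ([] : OpWord B) 1 else 0
  | u, ⟨n, b⟩ :: v =>
      (letterComp c (u.take n) b).sum fun a ca =>
        (wordComp c (u.drop n) v).sum fun w cw => Finsupp.single (a :: w) (ca * cw)
termination_by u v => v.length

section ConcatMul

variable {R α : Type*}

noncomputable def concatMul [Semiring R] (f g : List α →₀ R) : List α →₀ R :=
  f.sum fun s₁ c₁ => g.sum fun s₂ c₂ => Finsupp.single (s₁ ++ s₂) (c₁ * c₂)

section Semiring

variable [Semiring R]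

@[simp]
theorem zero_concatMul (g : List α →₀ R) : concatMul 0 g = 0 := by
  simp [concatMul]

@[simp]
theorem concatMul_zero (f : List α →₀ R) : concatMul f 0 = 0 := by
  simp [concatMul]

theorem single_nil_concatMul (g : List α →₀ R) : concatMul (Finsupp.single [] 1) g = g := by
  rw [concatMul, Finsupp.sum_single_index (by simp)]
  simp only [List.nil_append, one_mul, Finsupp.sum_single]

theorem concatMul_assoc (f g h : List α →₀ R) :
    concatMul (concatMul f g) h = concatMul f (concatMul g h) := by
  simp only [concatMul]
  rw [Finsupp.sum_sum_index (by simp) (by simp [add_mul])]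
  refine Finsupp.sum_congr fun s₁ _ => ?_
  rw [Finsupp.sum_sum_index (by simp) (by simp [add_mul]),
    Finsupp.sum_sum_index (by simp) (by simp [mul_add])]
  refine Finsupp.sum_congr fun s₂ _ => ?_
  rw [Finsupp.sum_single_index (by simp), Finsupp.sum_sum_index (by simp) (by simp [mul_add])]
  refine Finsupp.sum_congr fun s₃ _ => ?_
  rw [Finsupp.sum_single_index (by simp), List.append_assoc, mul_assoc]

theorem mapDomain_singleton_concatMul (f : α →₀ R) (g : List α →₀ R) :
    concatMul (f.mapDomain fun a => [a]) g
      = f.sum fun a ca => g.sum fun w cw => Finsupp.single (a :: w) (ca * cw) := by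
  rw [concatMul, Finsupp.mapDomain, Finsupp.sum_sum_index (by simp) (by simp [add_mul])]
  exact Finsupp.sum_congr fun a _ => Finsupp.sum_single_index (by simp)

theorem mem_support_concatMul [DecidableEq α] {f g : List α →₀ R} {s : List α}
    (hs : s ∈ (concatMul f g).support) :
    ∃ s₁ ∈ f.support, ∃ s₂ ∈ g.support, s = s₁ ++ s₂ := by
  obtain ⟨s₁, hs₁, hs⟩ := Finset.mem_biUnion.mp (Finsupp.support_sum hs)
  obtain ⟨s₂, hs₂, hs⟩ := Finset.mem_biUnion.mp (Finsupp.support_sum hs)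
  exact ⟨s₁, hs₁, s₂, hs₂, Finset.mem_singleton.mp (Finsupp.support_single_subset hs)⟩

theorem concatMul_apply_of_length {f : List α →₀ R} {ℓ : ℕ}
    (hf : ∀ s ∈ f.support, s.length = ℓ) (g : List α →₀ R) (t : List α) :
    concatMul f g t = f (t.take ℓ) * g (t.drop ℓ) := by
  classical
  have split_iff : ∀ s₁ ∈ f.support, ∀ s₂ : List α,
      s₁ ++ s₂ = t ↔ s₁ = t.take ℓ ∧ s₂ = t.drop ℓ := by
    intro s₁ hs₁ s₂
    constructor
    · rintro rfl
      exact ⟨(List.take_left' (hf s₁ hs₁)).symm, (List.drop_left' (hf s₁ hs₁)).symm⟩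
    · rintro ⟨rfl, rfl⟩
      exact List.take_append_drop ℓ t
  calc concatMul f g t
      = f.sum fun s₁ c₁ => g.sum fun s₂ c₂ =>
          Finsupp.single s₁ c₁ (t.take ℓ) * Finsupp.single s₂ c₂ (t.drop ℓ) := by
        simp only [concatMul, Finsupp.sum_apply]
        refine Finsupp.sum_congr fun s₁ hs₁ => Finsupp.sum_congr fun s₂ _ => ?_
        simp only [Finsupp.single_apply, split_iff s₁ hs₁ s₂, eq_comm (a := s₁), eq_comm (a := s₂)]
        split_ifs <;> simp_all
    _ = (f.sum fun s₁ c₁ => Finsupp.single s₁ c₁ (t.take ℓ))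
          * (g.sum fun s₂ c₂ => Finsupp.single s₂ c₂ (t.drop ℓ)) := by
        rw [Finsupp.sum_mul]
        simp only [Finsupp.mul_sum]
    _ = f (t.take ℓ) * g (t.drop ℓ) := by
        simp only [← Finsupp.sum_apply, Finsupp.sum_single]

end Semiring

theorem sum_concatMul_mul [CommSemiring R] {f g : List α →₀ R} {φ φ₁ φ₂ : List α → R}
    (h : ∀ s₁ ∈ f.support, ∀ s₂ ∈ g.support, φ (s₁ ++ s₂) = φ₁ s₁ * φ₂ s₂) :
    (concatMul f g).sum (fun s cs => cs * φ s)
      = (f.sum fun s cs => cs * φ₁ s) * (g.sum fun s cs => cs * φ₂ s) := by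
  rw [concatMul, Finsupp.sum_sum_index (by simp) (by simp [add_mul]), Finsupp.sum_mul]
  refine Finsupp.sum_congr fun s₁ hs₁ => ?_
  rw [Finsupp.sum_sum_index (by simp) (by simp [add_mul]), Finsupp.mul_sum]
  refine Finsupp.sum_congr fun s₂ hs₂ => ?_
  rw [Finsupp.sum_single_index (by simp), h s₁ hs₁ s₂ hs₂]
  ring

end ConcatMul

namespace OpWord

variable {B : ℕ → Type}

def arity (v : OpWord B) : ℕ := (v.map Sigma.fst).sum

@[simp]
theorem arity_nil : arity ([] : OpWord B) = 0 := rfl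

@[simp]
theorem arity_cons (x : Σ n, B n) (v : OpWord B) : arity (x :: v) = x.1 + arity v := by
  simp [arity]

@[simp]
theorem arity_append (v w : OpWord B) : arity (v ++ w) = arity v + arity w := by
  simp [arity]

theorem arity_eq_sum_get (v : OpWord B) : arity v = ∑ i : Fin v.length, (v.get i).1 := by
  rw [arity, ← List.sum_ofFn]
  congr 1
  exact List.ext_get (by simp) fun i _ _ => by simp

theorem arity_take_add_arity_drop (n : ℕ) (v : OpWord B) :
    arity (v.take n) + arity (v.drop n) = arity v := by
  rw [← arity_append, List.take_append_drop]

end OpWord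

open OpWord

section LetterComp

variable {K : Type} [Field K] {B : ℕ → Type} [∀ n, Fintype (B n)]
  (c : ∀ {n : ℕ} (k : Fin n → ℕ), (∀ i, B (k i)) → B n → B (∑ i, k i) → K)

theorem letterComp_eq_zero {u : OpWord B} {n : ℕ} (b : B n) (h : u.length ≠ n) :
    letterComp c u b = 0 := by
  rw [letterComp, dif_neg h]

theorem fst_eq_arity_of_mem_support_letterComp {u : OpWord B} {n : ℕ} {b : B n}
    {a : Σ m, B m} (ha : a ∈ (letterComp c u b).support) : a.1 = arity u := by
  classical
  unfold letterComp at ha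
  split_ifs at ha with h
  · obtain ⟨b', -, hb'⟩ := Finset.mem_biUnion.mp (Finsupp.support_finsetSum ha)
    rw [Finset.mem_singleton.mp (Finsupp.support_single_subset hb'), arity_eq_sum_get]
    exact Fintype.sum_equiv (finCongr h.symm) _ _ fun _ => rfl
  · simp at ha

end LetterComp

section WordComp

variable {K : Type} [Field K] {B : ℕ → Type} [∀ n, Fintype (B n)] [∀ n, DecidableEq (B n)]
  (c : ∀ {n : ℕ} (k : Fin n → ℕ), (∀ i, B (k i)) → B n → B (∑ i, k i) → K)

theorem wordComp_nil (u : OpWord B) :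
    wordComp c u [] = if u = [] then Finsupp.single [] 1 else 0 := by
  rw [wordComp]

theorem wordComp_cons (u : OpWord B) {n : ℕ} (b : B n) (v : OpWord B) :
    wordComp c u (⟨n, b⟩ :: v) =
      concatMul ((letterComp c (u.take n) b).mapDomain fun a => [a]) (wordComp c (u.drop n) v) := by
  rw [wordComp, mapDomain_singleton_concatMul]

theorem mem_support_wordComp_cons {u : OpWord B} {n : ℕ} {b : B n} {v s : OpWord B}
    (hs : s ∈ (wordComp c u (⟨n, b⟩ :: v)).support) :
    ∃ a ∈ (letterComp c (u.take n) b).support, ∃ r ∈ (wordComp c (u.drop n) v).support,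
      s = a :: r := by
  classical
  rw [wordComp_cons] at hs
  obtain ⟨s₁, hs₁, r, hr, rfl⟩ := mem_support_concatMul hs
  obtain ⟨a, ha, rfl⟩ := Finset.mem_image.mp (Finsupp.mapDomain_support hs₁)
  exact ⟨a, ha, r, hr, rfl⟩

theorem length_of_mem_support_wordComp {u v s : OpWord B}
    (hs : s ∈ (wordComp c u v).support) : s.length = v.length := by
  induction v generalizing u s with
  | nil =>
    rw [wordComp_nil] at hs
    split_ifs at hs
    · rw [Finset.mem_singleton.mp (Finsupp.support_single_subset hs)]
    · simp at hs
  | cons x v ih =>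
    obtain ⟨a, -, r, hr, rfl⟩ := mem_support_wordComp_cons c hs
    simp [ih hr]

theorem arity_of_mem_support_wordComp {u v s : OpWord B}
    (hs : s ∈ (wordComp c u v).support) : arity s = arity u := by
  induction v generalizing u s with
  | nil =>
    rw [wordComp_nil] at hs
    split_ifs at hs with hu
    · rw [Finset.mem_singleton.mp (Finsupp.support_single_subset hs), hu]
    · simp at hs
  | cons x v ih =>
    obtain ⟨a, ha, r, hr, rfl⟩ := mem_support_wordComp_cons c hs
    rw [arity_cons, fst_eq_arity_of_mem_support_letterComp c ha, ih hr,
      arity_take_add_arity_drop]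

theorem wordComp_eq_zero_of_length_ne {u v : OpWord B} (h : u.length ≠ arity v) :
    wordComp c u v = 0 := by
  induction v generalizing u with
  | nil => rw [wordComp_nil, if_neg (by simpa using h)]
  | cons x v ih =>
    obtain ⟨n, b⟩ := x
    rw [wordComp_cons]
    by_cases hn : (u.take n).length = n
    · have hdrop : (u.drop n).length ≠ arity v := by
        simp only [List.length_take, List.length_drop, arity_cons] at hn h ⊢
        omega
      rw [ih hdrop, concatMul_zero]
    · rw [letterComp_eq_zero c b hn, Finsupp.mapDomain_zero, zero_concatMul]

theorem wordComp_append (u v₁ v₂ : OpWord B) :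
    wordComp c u (v₁ ++ v₂) =
      concatMul (wordComp c (u.take (arity v₁)) v₁) (wordComp c (u.drop (arity v₁)) v₂) := by
  induction v₁ generalizing u with
  | nil => simp [wordComp_nil, single_nil_concatMul]
  | cons x v₁ ih =>
    obtain ⟨n, b⟩ := x
    rw [List.cons_append, wordComp_cons, wordComp_cons, ih, arity_cons, concatMul_assoc,
      List.take_take, min_eq_left (Nat.le_add_right _ _), List.drop_take,
      Nat.add_sub_cancel_left, List.drop_drop]

theorem wordComp_append_apply (u v₁ v₂ t : OpWord B) :
    wordComp c u (v₁ ++ v₂) t =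
      wordComp c (u.take (arity v₁)) v₁ (t.take v₁.length)
        * wordComp c (u.drop (arity v₁)) v₂ (t.drop v₁.length) := by
  rw [wordComp_append, concatMul_apply_of_length fun s hs => length_of_mem_support_wordComp c hs]

end WordComp

section CompAssoc

variable {K : Type} [Field K] {B : ℕ → Type} [∀ n, Fintype (B n)] [∀ n, DecidableEq (B n)]
  (c : ∀ {n : ℕ} (k : Fin n → ℕ), (∀ i, B (k i)) → B n → B (∑ i, k i) → K)

def CompAssocAt (w : OpWord B) : Prop :=
  ∀ u v t : OpWord B,
    (wordComp c u v).sum (fun s cs => cs * wordComp c s w t)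
      = (wordComp c v w).sum (fun s cs => cs * wordComp c u s t)

theorem compAssocAt_nil : CompAssocAt c [] := by
  intro u v t
  rcases v with _ | ⟨x, v⟩
  · rcases u with _ | ⟨y, u⟩ <;> simp [wordComp_nil]
  · rw [wordComp_nil, if_neg (List.cons_ne_nil _ _), Finsupp.sum_zero_index]
    refine Finset.sum_eq_zero fun s hs => ?_
    have hs_ne : s ≠ [] := by
      rintro rfl
      simpa using length_of_mem_support_wordComp c hs
    simp [wordComp_nil, hs_ne]

theorem CompAssocAt.append {w₁ w₂ : OpWord B} (h₁ : CompAssocAt c w₁) (h₂ : CompAssocAt c w₂) :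
    CompAssocAt c (w₁ ++ w₂) := by
  intro u v t
  set m := arity w₁
  by_cases hv : v.length < m
  · have hleft : ∀ s ∈ (wordComp c u v).support, wordComp c s (w₁ ++ w₂) = 0 := fun s hs =>
      wordComp_eq_zero_of_length_ne c
        (by rw [length_of_mem_support_wordComp c hs, arity_append]; omega)
    have hright : wordComp c v (w₁ ++ w₂) = 0 :=
      wordComp_eq_zero_of_length_ne c (by rw [arity_append]; omega)
    rw [hright, Finsupp.sum_zero_index]
    exact Finset.sum_eq_zero fun s hs => by simp [hleft s hs]
  set v₁ := v.take m
  set v₂ := v.drop m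
  set u₁ := u.take (arity v₁)
  set u₂ := u.drop (arity v₁)
  set t₁ := t.take w₁.length
  set t₂ := t.drop w₁.length
  have hL : (wordComp c u v).sum (fun s cs => cs * wordComp c s (w₁ ++ w₂) t)
      = (wordComp c u₁ v₁).sum (fun s cs => cs * wordComp c s w₁ t₁)
        * (wordComp c u₂ v₂).sum (fun s cs => cs * wordComp c s w₂ t₂) := by
    rw [← List.take_append_drop m v, wordComp_append]
    refine sum_concatMul_mul fun s₁ hs₁ s₂ _ => ?_
    have hs₁m : s₁.length = m := by
      rw [length_of_mem_support_wordComp c hs₁, List.length_take]; omega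
    rw [wordComp_append_apply, List.take_left' hs₁m, List.drop_left' hs₁m]
  have hR : (wordComp c v (w₁ ++ w₂)).sum (fun s cs => cs * wordComp c u s t)
      = (wordComp c v₁ w₁).sum (fun s cs => cs * wordComp c u₁ s t₁)
        * (wordComp c v₂ w₂).sum (fun s cs => cs * wordComp c u₂ s t₂) := by
    rw [wordComp_append]
    refine sum_concatMul_mul fun s₁ hs₁ s₂ _ => ?_
    rw [wordComp_append_apply, arity_of_mem_support_wordComp c hs₁,
      length_of_mem_support_wordComp c hs₁]
  rw [hL, hR, h₁, h₂]

end CompAssoc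

theorem operad_dual_coproduct_coassociative_general {K : Type} [Field K]
    {B : ℕ → Type} [∀ n, Fintype (B n)] [∀ n, DecidableEq (B n)]
    (c : ∀ {n : ℕ} (k : Fin n → ℕ), (∀ i, B (k i)) → B n → B (∑ i, k i) → K)
    (hassoc : ∀ (u v : OpWord B) (n : ℕ) (b : B n) (t : OpWord B),
      (wordComp c u v).sum (fun s cs => cs * wordComp c s [⟨n, b⟩] t)
        = (wordComp c v [⟨n, b⟩]).sum (fun s cs => cs * wordComp c u s t)) :
    ∀ u v w t : OpWord B,
      (wordComp c u v).sum (fun s cs => cs * wordComp c s w t)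
        = (wordComp c v w).sum (fun s cs => cs * wordComp c u s t) := by
  suffices ∀ w, CompAssocAt c w from fun u v w t => this w u v t
  intro w
  induction w with
  | nil => exact compAssocAt_nil c
  | cons x w ih =>
    obtain ⟨n, b⟩ := x
    exact CompAssocAt.append c (fun u v t => hassoc u v n b t) ih

/-- Foissy's construction: the coproduct `Δ` on `T(P)` dual to operadic composition,
defined by `⟨x₁⋯x_n ∘ x, x'⟩ = ⟨x₁⋯x_n ⊗ x, Δ(x')⟩` and extended multiplicatively to
the tensor algebra, is coassociative, so `(T(P), concatenation, Δ)` is a bialgebra.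
Coassociativity of `Δ` is stated here in its equivalent paired form: the associativity
of word composition `⟨(u ∘ v) ∘ w, t⟩ = ⟨u ∘ (v ∘ w), t⟩`, which holds for all words
`u, v, w` assuming the operad axioms (identity element, and associativity of
composition into a single operad element). -/
theorem operad_dual_coproduct_coassociative {K : Type} [Field K] [CharZero K]
    {B : ℕ → Type} [∀ n, Fintype (B n)] [∀ n, DecidableEq (B n)]
    (c : ∀ {n : ℕ} (k : Fin n → ℕ), (∀ i, B (k i)) → B n → B (∑ i, k i) → K)
    (e : B 1)
    (hidR : ∀ (n : ℕ) (b : B n),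
      wordComp c [⟨n, b⟩] [⟨1, e⟩] = Finsupp.single [⟨n, b⟩] 1)
    (hidL : ∀ (n : ℕ) (b : B n),
      wordComp c (List.replicate n ⟨1, e⟩) [⟨n, b⟩] = Finsupp.single [⟨n, b⟩] 1)
    (hassoc : ∀ (u v : OpWord B) (n : ℕ) (b : B n) (t : OpWord B),
      (wordComp c u v).sum (fun s cs => cs * wordComp c s [⟨n, b⟩] t)
        = (wordComp c v [⟨n, b⟩]).sum (fun s cs => cs * wordComp c u s t)) :
    ∀ u v w t : OpWord B,
      (wordComp c u v).sum (fun s cs => cs * wordComp c s w t)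
        = (wordComp c v w).sum (fun s cs => cs * wordComp c u s t) :=
  operad_dual_coproduct_coassociative_general c hassoc
end
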